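/- Let J_μ(x²) = (1/κ_μ) ∫_{-1}^1 e^{-2ivx}(1-v²)^{μ-3/2} dv with κ_μ = ∫_{-1}^1 (1-v²)^{μ-3/2} dv, for μ > 1/2. Then there is a constant C > 0 such that for all μ > 1/2 and all x ∈ ℝ: |J_μ(μ x²) - e^{-x²}| ≤ C/μ. -/

import Mathlib

open MeasureTheory Real Set

/-- The normalization constant `κ_μ = ∫_{-1}^1 (1 - v²)^{μ - 3/2} dv`. -/
noncomputable def kappaConst (μ : ℝ) : ℝ :=
  ∫ v in (-1 : ℝ)..1, (1 - v ^ 2) ^ (μ - 3 / 2)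

/-- The one-dimensional Bessel function `J_μ(x²)`, given by the integral representation
`J_μ(x²) = (1/κ_μ) ∫_{-1}^1 e^{-2ivx}(1-v²)^{μ-3/2} dv`; since the imaginary part
integrates to zero this equals the real integral against `cos (2vx)`. -/
noncomputable def besselJInt (μ x : ℝ) : ℝ :=
  (1 / kappaConst μ) * ∫ v in (-1 : ℝ)..1, Real.cos (2 * v * x) * (1 - v ^ 2) ^ (μ - 3 / 2)

lemma w_meas (μ : ℝ) : Measurable fun v : ℝ => (1 - v ^ 2) ^ (μ - 3 / 2) := by fun_prop

lemma w_intble {μ : ℝ} (hμ : 1 / 2 < μ) :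
    IntervalIntegrable (fun v => (1 - v ^ 2) ^ (μ - 3 / 2)) volume (-1) 1 := by
  set s := μ - 3 / 2 with hs
  have hs1 : -1 < s := by simp [hs]; linarith
  rcases le_or_gt 0 s with h0 | h0
  · apply ContinuousOn.intervalIntegrable
    exact ((continuous_const.sub (continuous_pow 2)).continuousOn).rpow_const
      fun x _ => Or.inr h0
  · have h01 : IntervalIntegrable (fun v => (1 - v ^ 2) ^ s) volume 0 1 := by
      have hd : IntervalIntegrable (fun v : ℝ => (1 - v) ^ s) volume 0 1 := by
        have := (intervalIntegral.intervalIntegrable_rpow' (a := 0) (b := 1) hs1).comp_sub_left 1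
        simpa using this.symm
      refine hd.mono_fun ((w_meas μ).aestronglyMeasurable) ?_
      filter_upwards [ae_restrict_mem measurableSet_Ioc] with v hv
      rw [uIoc_of_le (by norm_num : (0:ℝ) ≤ 1)] at hv
      have hv0 : 0 < v := hv.1
      have hv1 : v ≤ 1 := hv.2
      have h1v : (0:ℝ) ≤ 1 - v := by linarith
      have h2v : (0:ℝ) ≤ 1 + v := by linarith
      have hfact : (1 : ℝ) - v ^ 2 = (1 - v) * (1 + v) := by ring
      rw [Real.norm_eq_abs, Real.norm_eq_abs, abs_of_nonneg (Real.rpow_nonneg (by nlinarith) _),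
        abs_of_nonneg (Real.rpow_nonneg h1v _), hfact, Real.mul_rpow h1v h2v]
      have : (1 + v) ^ s ≤ 1 := Real.rpow_le_one_of_one_le_of_nonpos (by linarith) h0.le
      nlinarith [Real.rpow_nonneg h1v s, Real.rpow_nonneg h2v s]
    have h10 : IntervalIntegrable (fun v => (1 - v ^ 2) ^ s) volume (-1) 0 := by
      have hd : IntervalIntegrable (fun v : ℝ => (1 + v) ^ s) volume (-1) 0 := by
        have := (intervalIntegral.intervalIntegrable_rpow' (a := 0) (b := 1) hs1).comp_add_right 1
        simpa [add_comm] using this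
      refine hd.mono_fun ((w_meas μ).aestronglyMeasurable) ?_
      filter_upwards [ae_restrict_mem measurableSet_Ioc] with v hv
      rw [uIoc_of_le (by norm_num : (-1:ℝ) ≤ 0)] at hv
      have hv0 : -1 < v := hv.1
      have hv1 : v ≤ 0 := hv.2
      have h1v : (0:ℝ) ≤ 1 - v := by linarith
      have h2v : (0:ℝ) ≤ 1 + v := by linarith
      have hfact : (1 : ℝ) - v ^ 2 = (1 - v) * (1 + v) := by ring
      rw [Real.norm_eq_abs, Real.norm_eq_abs, abs_of_nonneg (Real.rpow_nonneg (by nlinarith) _),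
        abs_of_nonneg (Real.rpow_nonneg h2v _), hfact, Real.mul_rpow h1v h2v]
      have : (1 - v) ^ s ≤ 1 := Real.rpow_le_one_of_one_le_of_nonpos (by linarith) h0.le
      nlinarith [Real.rpow_nonneg h1v s, Real.rpow_nonneg h2v s]
    exact h10.trans h01

lemma kappa_pos {μ : ℝ} (hμ : 1 / 2 < μ) : 0 < kappaConst μ := by
  refine intervalIntegral.intervalIntegral_pos_of_pos_on (w_intble hμ) ?_ (by norm_num)
  intro v hv
  exact Real.rpow_pos_of_pos (by nlinarith [hv.1, hv.2]) _

lemma J_le_one {μ : ℝ} (hμ : 1 / 2 < μ) (y : ℝ) : |besselJInt μ y| ≤ 1 := by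
  have hκ := kappa_pos hμ
  have hb : |∫ v in (-1:ℝ)..1, Real.cos (2 * v * y) * (1 - v ^ 2) ^ (μ - 3 / 2)| ≤
      kappaConst μ := by
    have := intervalIntegral.norm_integral_le_abs_of_norm_le (μ := volume) (a := -1) (b := 1)
      (f := fun v => Real.cos (2 * v * y) * (1 - v ^ 2) ^ (μ - 3 / 2))
      (g := fun v => (1 - v ^ 2) ^ (μ - 3 / 2)) ?_ (w_intble hμ)
    · rw [Real.norm_eq_abs] at this
      calc |∫ v in (-1:ℝ)..1, Real.cos (2 * v * y) * (1 - v ^ 2) ^ (μ - 3 / 2)| ≤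
          |kappaConst μ| := this
        _ = kappaConst μ := abs_of_pos hκ
    · filter_upwards [ae_restrict_mem measurableSet_uIoc] with v hv
      rw [uIoc_of_le (by norm_num : (-1:ℝ) ≤ 1)] at hv
      have hb0 : (0:ℝ) ≤ 1 - v ^ 2 := by nlinarith [hv.1, hv.2]
      have h1 : (0:ℝ) ≤ (1 - v ^ 2) ^ (μ - 3 / 2) := Real.rpow_nonneg hb0 _
      rw [Real.norm_eq_abs, abs_mul]
      calc |Real.cos (2 * v * y)| * |(1 - v ^ 2) ^ (μ - 3 / 2)| ≤
          1 * |(1 - v ^ 2) ^ (μ - 3 / 2)| := by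
            gcongr; exact Real.abs_cos_le_one _
        _ = (1 - v ^ 2) ^ (μ - 3 / 2) := by rw [one_mul, abs_of_nonneg h1]
  rw [besselJInt, abs_mul, abs_div, abs_one, abs_of_pos hκ]
  rw [div_mul_eq_mul_div, one_mul, div_le_one hκ]
  exact hb


lemma cos_gauss (x : ℝ) :
    ∫ t : ℝ, Real.cos (2 * t * x) * Real.exp (-t ^ 2) = Real.sqrt π * Real.exp (-x ^ 2) := by
  have hint : Integrable fun t : ℝ =>
      Complex.exp (Complex.I * (2 * x : ℝ) * t) * Complex.exp (-1 * (t:ℂ) ^ 2) := by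
    have h := integrable_cexp_quadratic (b := 1) (by norm_num) (Complex.I * (2 * x : ℝ)) 0
    refine h.congr (Filter.Eventually.of_forall fun t => ?_)
    simp only [← Complex.exp_add]
    congr 1
    push_cast
    ring
  have h := fourierIntegral_gaussian (b := 1) (by norm_num) (2 * x : ℝ)
  have hre := integral_re (μ := volume) hint
  rw [h] at hre
  have hlhs : ∀ t : ℝ, (RCLike.re (Complex.exp (Complex.I * (2 * x : ℝ) * t)
      * Complex.exp (-1 * (t:ℂ) ^ 2)) : ℝ) = Real.cos (2 * t * x) * Real.exp (-t ^ 2) := by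
    intro t
    rw [← Complex.exp_add]
    have hz : Complex.I * ((2 * x : ℝ) : ℂ) * t + -1 * (t:ℂ) ^ 2 =
        ((-t ^ 2 : ℝ) : ℂ) + ((2 * t * x : ℝ) : ℂ) * Complex.I := by push_cast; ring
    rw [hz]
    rw [RCLike.re_to_complex, Complex.exp_re]
    simp [← Complex.ofReal_pow, mul_comm]
  have hrhs : (RCLike.re (((π : ℂ) / 1) ^ (1 / 2 : ℂ)
      * Complex.exp (-(2 * x : ℝ) ^ 2 / (4 * 1))) : ℝ) = Real.sqrt π * Real.exp (-x ^ 2) := by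
    have h1 : ((π : ℂ) / 1) ^ (1 / 2 : ℂ) = ((Real.sqrt π : ℝ) : ℂ) := by
      rw [div_one, Real.sqrt_eq_rpow, Complex.ofReal_cpow Real.pi_nonneg]
      norm_num
    have h2 : (-((2 * x : ℝ) : ℂ) ^ 2 / (4 * 1)) = ((-x ^ 2 : ℝ) : ℂ) := by
      push_cast; ring
    rw [h1, h2, ← Complex.ofReal_exp, ← Complex.ofReal_mul, RCLike.re_to_complex,
      Complex.ofReal_re]
  calc ∫ t : ℝ, Real.cos (2 * t * x) * Real.exp (-t ^ 2)
      = ∫ t : ℝ, (RCLike.re (Complex.exp (Complex.I * (2 * x : ℝ) * t)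
        * Complex.exp (-1 * (t:ℂ) ^ 2)) : ℝ) := by
        refine integral_congr_ae (Filter.Eventually.of_forall fun t => ?_)
        simpa using (hlhs t).symm
    _ = Real.sqrt π * Real.exp (-x ^ 2) := by rw [hre, hrhs]

lemma poly_exp (t : ℝ) : t ^ 2 + t ^ 4 ≤ 68 * Real.exp (t ^ 2 / 4) := by
  have e1 := Real.add_one_le_exp (t ^ 2 / 4)
  have e2 := Real.add_one_le_exp (t ^ 2 / 8)
  have e3 : Real.exp (t ^ 2 / 8) * Real.exp (t ^ 2 / 8) = Real.exp (t ^ 2 / 4) := by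
    rw [← Real.exp_add]; ring_nf
  nlinarith [sq_nonneg t, Real.exp_pos (t ^ 2 / 8), Real.exp_pos (t ^ 2 / 4), sq_nonneg (t^2/8)]

lemma exp_shift (t : ℝ) : Real.exp (-t ^ 2) * Real.exp (t ^ 2 / 4) ≤ Real.exp (-t ^ 2 / 4) := by
  rw [← Real.exp_add]
  exact Real.exp_le_exp.mpr (by nlinarith [sq_nonneg t])

set_option maxHeartbeats 1000000 in
lemma core {μ t : ℝ} (hμ : 4 ≤ μ) (ht : t ^ 2 ≤ μ) :
    |(1 - t ^ 2 / μ) ^ (μ - 3 / 2) - Real.exp (-t ^ 2)| ≤ 720 / μ * Real.exp (-t ^ 2 / 4) := by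
  have hμ0 : (0:ℝ) < μ := by linarith
  set u : ℝ := t ^ 2 / μ with hu
  have hu0 : 0 ≤ u := div_nonneg (sq_nonneg t) hμ0.le
  have hu1 : u ≤ 1 := (div_le_one hμ0).mpr ht
  have huμ : u * μ = t ^ 2 := div_mul_cancel₀ _ (ne_of_gt hμ0)
  have hm : (0:ℝ) ≤ μ - 3 / 2 := by linarith
  have hg0 : 0 < Real.exp (-t ^ 2) := Real.exp_pos _
  rcases le_or_gt u (1/2) with hcase | hcase
  · -- inner region
    have hb : 0 < 1 - u := by linarith
    have hrw : (1 - u) ^ (μ - 3 / 2) = Real.exp (Real.log (1 - u) * (μ - 3 / 2)) :=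
      Real.rpow_def_of_pos hb _
    have hlogU : Real.log (1 - u) ≤ -u := by
      have := Real.log_le_sub_one_of_pos hb; linarith
    have hlogL : -(u + 2 * u ^ 2) ≤ Real.log (1 - u) := by
      have h1 := Real.one_sub_inv_le_log_of_pos hb
      have h2 : (1 - u)⁻¹ ≤ 1 + u + 2 * u ^ 2 := by
        rw [inv_eq_one_div, div_le_iff₀ hb]; nlinarith
      linarith
    have hu2 : u ^ 2 * μ = t ^ 4 / μ := by
      rw [hu]; field_simp
    set A : ℝ := 3 / 2 * u with hA
    set B : ℝ := 2 * (t ^ 4 / μ) with hB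
    have hA0 : 0 ≤ A := by positivity
    have hA34 : A ≤ 3 / 4 := by simp only [hA]; linarith
    have hB0 : 0 ≤ B := by positivity
    have hEU : Real.log (1 - u) * (μ - 3 / 2) ≤ -t ^ 2 + A := by
      have := mul_le_mul_of_nonneg_right hlogU hm
      nlinarith
    have hEL : -t ^ 2 - B ≤ Real.log (1 - u) * (μ - 3 / 2) := by
      have h3 := mul_le_mul_of_nonneg_right hlogL hm
      nlinarith
    have hhU : (1 - u) ^ (μ - 3 / 2) ≤ Real.exp (-t ^ 2) * Real.exp A := by
      rw [hrw, ← Real.exp_add]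
      exact Real.exp_le_exp.mpr (by linarith)
    have hhL : Real.exp (-t ^ 2) * Real.exp (-B) ≤ (1 - u) ^ (μ - 3 / 2) := by
      rw [hrw, ← Real.exp_add]
      exact Real.exp_le_exp.mpr (by linarith)
    have key1 : Real.exp A - 1 ≤ 3 * A := by
      have e1 : Real.exp A ≤ Real.exp 1 := Real.exp_le_exp.mpr (by linarith)
      have e2 : Real.exp 1 < 3 := by
        have := Real.exp_one_lt_d9; norm_num at this ⊢; linarith
      have e3 : 1 - A ≤ Real.exp (-A) := by have := Real.add_one_le_exp (-A); linarith
      have e4 : Real.exp A * Real.exp (-A) = 1 := by rw [← Real.exp_add]; simp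
      nlinarith [Real.exp_pos A]
    have key2 : 1 - Real.exp (-B) ≤ B := by
      have := Real.add_one_le_exp (-B); linarith
    have m1 : Real.exp (-t ^ 2) * (Real.exp A - 1) ≤ Real.exp (-t ^ 2) * (3 * A) :=
      mul_le_mul_of_nonneg_left key1 hg0.le
    have m2 : Real.exp (-t ^ 2) * (1 - Real.exp (-B)) ≤ Real.exp (-t ^ 2) * B :=
      mul_le_mul_of_nonneg_left key2 hg0.le
    have habs : |(1 - u) ^ (μ - 3 / 2) - Real.exp (-t ^ 2)| ≤
        Real.exp (-t ^ 2) * (3 * A + B) := by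
      rw [abs_sub_le_iff]
      constructor
      · calc (1 - u) ^ (μ - 3 / 2) - Real.exp (-t ^ 2)
            ≤ Real.exp (-t ^ 2) * Real.exp A - Real.exp (-t ^ 2) := by linarith
          _ = Real.exp (-t ^ 2) * (Real.exp A - 1) := by ring
          _ ≤ Real.exp (-t ^ 2) * (3 * A) := m1
          _ ≤ Real.exp (-t ^ 2) * (3 * A + B) :=
              mul_le_mul_of_nonneg_left (by linarith) hg0.le
      · calc Real.exp (-t ^ 2) - (1 - u) ^ (μ - 3 / 2)
            ≤ Real.exp (-t ^ 2) - Real.exp (-t ^ 2) * Real.exp (-B) := by linarith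
          _ = Real.exp (-t ^ 2) * (1 - Real.exp (-B)) := by ring
          _ ≤ Real.exp (-t ^ 2) * B := m2
          _ ≤ Real.exp (-t ^ 2) * (3 * A + B) :=
              mul_le_mul_of_nonneg_left (by linarith) hg0.le
    refine habs.trans ?_
    have hsum : 3 * A + B ≤ 5 * (t ^ 2 + t ^ 4) / μ := by
      simp only [hA, hB, hu]
      rw [show (3:ℝ) * (3 / 2 * (t ^ 2 / μ)) + 2 * (t ^ 4 / μ)
        = (9 / 2 * t ^ 2 + 2 * t ^ 4) / μ from by ring]
      refine (div_le_div_iff_of_pos_right hμ0).mpr ?_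
      have h4 : (0:ℝ) ≤ t ^ 4 := by positivity
      nlinarith [sq_nonneg t]
    calc Real.exp (-t ^ 2) * (3 * A + B) ≤ Real.exp (-t ^ 2) * (5 * (t ^ 2 + t ^ 4) / μ) := by
          exact mul_le_mul_of_nonneg_left hsum hg0.le
      _ ≤ Real.exp (-t ^ 2) * (5 * (68 * Real.exp (t ^ 2 / 4)) / μ) := by
          refine mul_le_mul_of_nonneg_left ?_ hg0.le
          exact (div_le_div_iff_of_pos_right hμ0).mpr (by linarith [poly_exp t])
      _ = 340 / μ * (Real.exp (-t ^ 2) * Real.exp (t ^ 2 / 4)) := by ring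
      _ ≤ 340 / μ * Real.exp (-t ^ 2 / 4) := by
          refine mul_le_mul_of_nonneg_left (exp_shift t) (by positivity)
      _ ≤ 720 / μ * Real.exp (-t ^ 2 / 4) := by
          refine mul_le_mul_of_nonneg_right ?_ (Real.exp_pos _).le
          exact (div_le_div_iff_of_pos_right hμ0).mpr (by norm_num)
  · -- outer region
    have hh10 : (1 - u) ^ (μ - 3 / 2) ≤ 9 * Real.exp (-t ^ 2) := by
      have he2 : Real.exp (3/2 : ℝ) ≤ 9 := by
        have e2 : Real.exp 1 < 3 := by
          have := Real.exp_one_lt_d9; norm_num at this ⊢; linarith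
        have : Real.exp (3/2 : ℝ) ≤ Real.exp 1 * Real.exp 1 := by
          rw [← Real.exp_add]; exact Real.exp_le_exp.mpr (by norm_num)
        nlinarith [Real.exp_pos 1]
      rcases eq_or_lt_of_le hu1 with h1 | h1
      · rw [← h1]
        simp only [sub_self]
        rw [Real.zero_rpow (by intro h; rw [h] at hm; linarith)]
        positivity
      · have hb : 0 < 1 - u := by linarith
        have hrw : (1 - u) ^ (μ - 3 / 2) = Real.exp (Real.log (1 - u) * (μ - 3 / 2)) :=
          Real.rpow_def_of_pos hb _
        have hlogU : Real.log (1 - u) ≤ -u := by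
          have := Real.log_le_sub_one_of_pos hb; linarith
        have hEU : Real.log (1 - u) * (μ - 3 / 2) ≤ -t ^ 2 + 3/2 := by
          have := mul_le_mul_of_nonneg_right hlogU hm
          nlinarith
        rw [hrw]
        calc Real.exp (Real.log (1 - u) * (μ - 3 / 2)) ≤ Real.exp (-t ^ 2 + 3/2) :=
              Real.exp_le_exp.mpr hEU
          _ = Real.exp (3/2 : ℝ) * Real.exp (-t ^ 2) := by rw [← Real.exp_add]; ring_nf
          _ ≤ 9 * Real.exp (-t ^ 2) := by gcongr
    have hh0 : 0 ≤ (1 - u) ^ (μ - 3 / 2) := Real.rpow_nonneg (by linarith) _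
    have habs : |(1 - u) ^ (μ - 3 / 2) - Real.exp (-t ^ 2)| ≤ 10 * Real.exp (-t ^ 2) := by
      rw [abs_sub_le_iff]; constructor <;> nlinarith
    refine habs.trans ?_
    -- 10 * exp(-t²) ≤ 720/μ * exp(-t²/4) since t² ≥ μ/2
    have htμ : μ / 2 ≤ t ^ 2 := by
      have : μ / 2 < u * μ := by nlinarith
      linarith [huμ ▸ this]
    have hsplit : Real.exp (-t ^ 2) = Real.exp (-t ^ 2 / 4) * Real.exp (-(3 * t ^ 2 / 4)) := by
      rw [← Real.exp_add]; ring_nf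
    have hdecay : Real.exp (-(3 * t ^ 2 / 4)) ≤ 8 / (3 * μ) := by
      have h1 : Real.exp (-(3 * t ^ 2 / 4)) ≤ Real.exp (-(3 * μ / 8)) :=
        Real.exp_le_exp.mpr (by linarith)
      have h2 : 3 * μ / 8 ≤ Real.exp (3 * μ / 8) := by
        have := Real.add_one_le_exp (3 * μ / 8); linarith
      have h3 : Real.exp (-(3 * μ / 8)) = (Real.exp (3 * μ / 8))⁻¹ := by
        rw [← Real.exp_neg]
      rw [h3] at h1
      have h4 : (Real.exp (3 * μ / 8))⁻¹ ≤ (3 * μ / 8)⁻¹ := by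
        apply inv_anti₀ (by linarith) h2
      have h5 : (3 * μ / 8)⁻¹ = 8 / (3 * μ) := by field_simp
      rw [h5] at h4
      linarith
    calc (10:ℝ) * Real.exp (-t ^ 2)
        = 10 * (Real.exp (-t ^ 2 / 4) * Real.exp (-(3 * t ^ 2 / 4))) := by rw [← hsplit]
      _ ≤ 10 * (Real.exp (-t ^ 2 / 4) * (8 / (3 * μ))) := by
          gcongr
      _ = 80 / (3 * μ) * Real.exp (-t ^ 2 / 4) := by ring
      _ ≤ 720 / μ * Real.exp (-t ^ 2 / 4) := by
          refine mul_le_mul_of_nonneg_right ?_ (Real.exp_pos _).le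
          rw [div_le_div_iff₀ (by linarith : (0:ℝ) < 3 * μ) hμ0]
          nlinarith

lemma sqrt_two_pi_le : Real.sqrt (2 * π) ≤ 3 := by
  have h1 : Real.sqrt (2 * π) ≤ Real.sqrt 9 :=
    Real.sqrt_le_sqrt (by nlinarith [Real.pi_le_four])
  have h2 : Real.sqrt 9 = 3 := by
    rw [show (9:ℝ) = 3 ^ 2 by norm_num]; exact Real.sqrt_sq (by norm_num)
  linarith

lemma sqrt_four_pi_le : Real.sqrt (4 * π) ≤ 4 := by
  have h1 : Real.sqrt (4 * π) ≤ Real.sqrt 16 :=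
    Real.sqrt_le_sqrt (by nlinarith [Real.pi_le_four])
  have h2 : Real.sqrt 16 = 4 := by
    rw [show (16:ℝ) = 4 ^ 2 by norm_num]; exact Real.sqrt_sq (by norm_num)
  linarith

lemma exp_neg_half_le {μ : ℝ} (hμ : 0 < μ) : Real.exp (-(μ / 2)) ≤ 2 / μ := by
  have h2 : μ / 2 ≤ Real.exp (μ / 2) := by
    have := Real.add_one_le_exp (μ / 2); linarith
  rw [Real.exp_neg]
  have h4 : (Real.exp (μ / 2))⁻¹ ≤ (μ / 2)⁻¹ := inv_anti₀ (by linarith) h2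
  have h5 : (μ / 2)⁻¹ = 2 / μ := by field_simp
  linarith [h5 ▸ h4]

lemma I_est {μ : ℝ} (hμ : 4 ≤ μ) (x : ℝ) :
    |(∫ t in (-Real.sqrt μ)..(Real.sqrt μ),
        Real.cos (2 * t * x) * (1 - t ^ 2 / μ) ^ (μ - 3 / 2))
      - Real.sqrt π * Real.exp (-x ^ 2)| ≤ 2886 / μ := by
  have hμ0 : (0:ℝ) < μ := by linarith
  set s : ℝ := Real.sqrt μ with hsdef
  have hs0 : 0 < s := Real.sqrt_pos.mpr hμ0
  have hss : s ^ 2 = μ := Real.sq_sqrt hμ0.le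
  have hsle : -s ≤ s := by linarith
  have hcont_h : Continuous fun t : ℝ => (1 - t ^ 2 / μ) ^ (μ - 3 / 2) :=
    (continuous_const.sub ((continuous_pow 2).div_const μ)).rpow_const
      fun t => Or.inr (by linarith)
  have hch : Continuous fun t : ℝ => Real.cos (2 * t * x) * (1 - t ^ 2 / μ) ^ (μ - 3 / 2) :=
    (Real.continuous_cos.comp (by continuity)).mul hcont_h
  have Hi : IntervalIntegrable
      (fun t => Real.cos (2 * t * x) * (1 - t ^ 2 / μ) ^ (μ - 3 / 2)) volume (-s) s :=
    hch.intervalIntegrable _ _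
  set G : ℝ → ℝ := fun t => Real.cos (2 * t * x) * Real.exp (-t ^ 2) with hGdef
  have GC : Continuous G := (Real.continuous_cos.comp (by continuity)).mul
    (Real.continuous_exp.comp (continuous_pow 2).neg)
  have Gi : Integrable G := by
    refine (integrable_exp_neg_mul_sq (by norm_num : (0:ℝ) < 1)).mono
      GC.aestronglyMeasurable (Filter.Eventually.of_forall fun t => ?_)
    simp only [hGdef, Real.norm_eq_abs, abs_mul, Real.abs_exp, neg_mul, one_mul]
    nlinarith [Real.abs_cos_le_one (2 * t * x), Real.exp_pos (-t ^ 2), abs_nonneg (Real.cos (2*t*x))]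
  have GIi : IntervalIntegrable G volume (-s) s := GC.intervalIntegrable _ _
  -- step 1
  have step1 : |(∫ t in (-s)..s, Real.cos (2 * t * x) * (1 - t ^ 2 / μ) ^ (μ - 3 / 2))
      - ∫ t in (-s)..s, G t| ≤ 2880 / μ := by
    rw [← intervalIntegral.integral_sub Hi GIi]
    have hb := intervalIntegral.norm_integral_le_abs_of_norm_le (μ := volume) (a := -s) (b := s)
      (f := fun t => Real.cos (2 * t * x) * (1 - t ^ 2 / μ) ^ (μ - 3 / 2) - G t)
      (g := fun t => 720 / μ * Real.exp (-t ^ 2 / 4)) ?_ ?_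
    · refine hb.trans ?_
      have hnn : ∀ t : ℝ, 0 ≤ 720 / μ * Real.exp (-t ^ 2 / 4) := fun t => by positivity
      rw [abs_of_nonneg (intervalIntegral.integral_nonneg hsle fun t _ => hnn t)]
      rw [intervalIntegral.integral_const_mul]
      have h1 : (∫ t in (-s)..s, Real.exp (-t ^ 2 / 4)) ≤ 4 := by
        rw [intervalIntegral.integral_of_le hsle]
        have h2 : (∫ t in Set.Ioc (-s) s, Real.exp (-t ^ 2 / 4)) ≤
            ∫ t : ℝ, Real.exp (-(1/4) * t ^ 2) := by
          have heq : ∀ t : ℝ, Real.exp (-t ^ 2 / 4) = Real.exp (-(1/4) * t ^ 2) := fun t => by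
            ring_nf
          simp_rw [heq]
          exact setIntegral_le_integral (integrable_exp_neg_mul_sq (by norm_num))
            (Filter.Eventually.of_forall fun t => (Real.exp_pos _).le)
        rw [integral_gaussian] at h2
        refine h2.trans ?_
        rw [show π / (1/4 : ℝ) = 4 * π by ring]
        exact sqrt_four_pi_le
      calc 720 / μ * ∫ t in (-s)..s, Real.exp (-t ^ 2 / 4) ≤ 720 / μ * 4 :=
            mul_le_mul_of_nonneg_left h1 (by positivity)
        _ = 2880 / μ := by ring
    · filter_upwards [ae_restrict_mem measurableSet_uIoc] with t ht
      rw [Set.uIoc_of_le hsle] at ht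
      have ht2 : t ^ 2 ≤ μ := by nlinarith [ht.1, ht.2]
      have hc := core hμ ht2
      rw [Real.norm_eq_abs, show Real.cos (2 * t * x) * (1 - t ^ 2 / μ) ^ (μ - 3 / 2) - G t
        = Real.cos (2 * t * x) * ((1 - t ^ 2 / μ) ^ (μ - 3 / 2) - Real.exp (-t ^ 2)) from by
          simp only [hGdef]; ring, abs_mul]
      calc |Real.cos (2 * t * x)| * |(1 - t ^ 2 / μ) ^ (μ - 3 / 2) - Real.exp (-t ^ 2)|
          ≤ 1 * (720 / μ * Real.exp (-t ^ 2 / 4)) := by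
            refine mul_le_mul (Real.abs_cos_le_one _) hc (abs_nonneg _) zero_le_one
        _ = 720 / μ * Real.exp (-t ^ 2 / 4) := by ring
    · exact (continuous_const.mul (Real.continuous_exp.comp
        (by continuity))).intervalIntegrable _ _
  -- step 2
  have step2 : |(∫ t : ℝ, G t) - ∫ t in (-s)..s, G t| ≤ 6 / μ := by
    rw [intervalIntegral.integral_of_le hsle]
    have hcompl := integral_add_compl
      (measurableSet_Ioc : MeasurableSet (Set.Ioc (-s) s)) Gi
    have heq : (∫ t : ℝ, G t) - ∫ t in Set.Ioc (-s) s, G t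
        = ∫ t in (Set.Ioc (-s) s)ᶜ, G t := by linarith [hcompl]
    rw [heq]
    have hnorm : |∫ t in (Set.Ioc (-s) s)ᶜ, G t| ≤
        ∫ t in (Set.Ioc (-s) s)ᶜ, ‖G t‖ := by
      simpa [Real.norm_eq_abs] using norm_integral_le_integral_norm
        (μ := volume.restrict (Set.Ioc (-s) s)ᶜ) G
    refine hnorm.trans ?_
    have hmono : (∫ t in (Set.Ioc (-s) s)ᶜ, ‖G t‖) ≤
        ∫ t in (Set.Ioc (-s) s)ᶜ, Real.exp (-(μ/2)) * Real.exp (-(1/2) * t ^ 2) := by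
      refine setIntegral_mono_on Gi.norm.integrableOn
        ((((integrable_exp_neg_mul_sq (by norm_num : (0:ℝ) < 1/2)).const_mul
          (Real.exp (-(μ/2))))).integrableOn) measurableSet_Ioc.compl ?_
      intro t ht
      have ht2 : μ ≤ t ^ 2 := by
        simp only [Set.mem_compl_iff, Set.mem_Ioc, not_and_or, not_lt, not_le] at ht
        rcases ht with h | h
        · nlinarith
        · nlinarith
      have hGle : ‖G t‖ ≤ Real.exp (-t ^ 2) := by
        simp only [hGdef, Real.norm_eq_abs, abs_mul, Real.abs_exp]
        nlinarith [Real.abs_cos_le_one (2 * t * x), Real.exp_pos (-t ^ 2),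
          abs_nonneg (Real.cos (2*t*x))]
      refine hGle.trans ?_
      rw [← Real.exp_add]
      exact Real.exp_le_exp.mpr (by linarith)
    refine hmono.trans ?_
    have hle2 : (∫ t in (Set.Ioc (-s) s)ᶜ, Real.exp (-(μ/2)) * Real.exp (-(1/2) * t ^ 2))
        ≤ ∫ t : ℝ, Real.exp (-(μ/2)) * Real.exp (-(1/2) * t ^ 2) :=
      setIntegral_le_integral ((integrable_exp_neg_mul_sq (by norm_num : (0:ℝ) < 1/2)).const_mul _)
        (Filter.Eventually.of_forall fun t => by positivity)
    refine hle2.trans ?_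
    rw [integral_const_mul, integral_gaussian, show π / (1/2 : ℝ) = 2 * π by ring]
    calc Real.exp (-(μ/2)) * Real.sqrt (2 * π) ≤ (2 / μ) * 3 := by
          refine mul_le_mul (exp_neg_half_le hμ0) sqrt_two_pi_le (Real.sqrt_nonneg _)
            (by positivity)
      _ ≤ 6 / μ := by rw [div_mul_eq_mul_div]; apply div_le_div_of_nonneg_right <;> linarith
  have hG : (∫ t : ℝ, G t) = Real.sqrt π * Real.exp (-x ^ 2) := cos_gauss x
  calc |(∫ t in (-s)..s, Real.cos (2 * t * x) * (1 - t ^ 2 / μ) ^ (μ - 3 / 2))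
      - Real.sqrt π * Real.exp (-x ^ 2)|
      ≤ |(∫ t in (-s)..s, Real.cos (2 * t * x) * (1 - t ^ 2 / μ) ^ (μ - 3 / 2))
        - ∫ t in (-s)..s, G t| + |(∫ t in (-s)..s, G t) - Real.sqrt π * Real.exp (-x ^ 2)| := by
        exact abs_sub_le _ _ _
    _ ≤ 2880 / μ + 6 / μ := by
        refine add_le_add step1 ?_
        rw [abs_sub_comm, ← hG]
        exact step2
    _ = 2886 / μ := by ring

lemma besselSubst {μ : ℝ} (hμ0 : 0 < μ) (x : ℝ) :
    (∫ v in (-1:ℝ)..1, Real.cos (2 * v * (Real.sqrt μ * x)) * (1 - v ^ 2) ^ (μ - 3 / 2))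
    = (Real.sqrt μ)⁻¹ * ∫ t in (-Real.sqrt μ)..(Real.sqrt μ),
        Real.cos (2 * t * x) * (1 - t ^ 2 / μ) ^ (μ - 3 / 2) := by
  have hs0 : 0 < Real.sqrt μ := Real.sqrt_pos.mpr hμ0
  have hss : Real.sqrt μ ^ 2 = μ := Real.sq_sqrt hμ0.le
  have h := intervalIntegral.integral_comp_mul_left
    (f := fun t => Real.cos (2 * t * x) * (1 - t ^ 2 / μ) ^ (μ - 3 / 2))
    (a := -1) (b := 1) (c := Real.sqrt μ) hs0.ne'
  rw [mul_neg_one, mul_one, smul_eq_mul] at h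
  rw [← h]
  refine intervalIntegral.integral_congr fun v hv => ?_
  show _ = Real.cos (2 * (Real.sqrt μ * v) * x) * (1 - (Real.sqrt μ * v) ^ 2 / μ) ^ (μ - 3 / 2)
  have h1 : (Real.sqrt μ * v) ^ 2 / μ = v ^ 2 := by
    rw [mul_pow, hss]; field_simp
  rw [h1, show 2 * (Real.sqrt μ * v) * x = 2 * v * (Real.sqrt μ * x) from by ring]

theorem stmt_11 :
    ∃ C > 0, ∀ μ : ℝ, 1 / 2 < μ → ∀ x : ℝ,
      |besselJInt μ (Real.sqrt μ * x) - Real.exp (-x ^ 2)| ≤ C / μ := by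
  refine ⟨50000, by norm_num, fun μ hμ x => ?_⟩
  have hμ0 : (0:ℝ) < μ := by linarith
  have hexp1 : Real.exp (-x ^ 2) ≤ 1 := Real.exp_le_one_iff.mpr (neg_nonpos.mpr (sq_nonneg x))
  have hexp0 : 0 < Real.exp (-x ^ 2) := Real.exp_pos _
  rcases lt_or_ge μ 25000 with hcase | hcase
  · have h1 := J_le_one hμ (Real.sqrt μ * x)
    have h2 : |besselJInt μ (Real.sqrt μ * x) - Real.exp (-x ^ 2)| ≤ 2 := by
      calc |besselJInt μ (Real.sqrt μ * x) - Real.exp (-x ^ 2)|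
          ≤ |besselJInt μ (Real.sqrt μ * x)| + |Real.exp (-x ^ 2)| := abs_sub _ _
        _ ≤ 1 + 1 := add_le_add h1 (by rw [abs_of_pos hexp0]; exact hexp1)
        _ = 2 := by norm_num
    refine h2.trans ?_
    rw [le_div_iff₀ hμ0]
    linarith
  · have hμ4 : (4:ℝ) ≤ μ := by linarith
    have hκ := kappa_pos hμ
    have hs0 : 0 < Real.sqrt μ := Real.sqrt_pos.mpr hμ0
    set s : ℝ := Real.sqrt μ with hsdef
    set I : ℝ := ∫ t in (-s)..s, Real.cos (2 * t * x) * (1 - t ^ 2 / μ) ^ (μ - 3 / 2) with hIdef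
    set N : ℝ := s * kappaConst μ with hNdef
    have hN0 : 0 < N := mul_pos hs0 hκ
    have hJ : besselJInt μ (s * x) = I / N := by
      rw [besselJInt, besselSubst hμ0 x, ← hsdef, ← hIdef, hNdef]
      rw [one_div, div_eq_mul_inv, mul_inv]
      ring
    -- N is close to √π
    have hsub0 := besselSubst hμ0 0
    have hκeq : (∫ v in (-1:ℝ)..1, Real.cos (2 * v * (s * 0)) * (1 - v ^ 2) ^ (μ - 3 / 2))
        = kappaConst μ := by
      rw [kappaConst]
      refine intervalIntegral.integral_congr fun v hv => ?_
      rw [mul_zero, mul_zero, Real.cos_zero, one_mul]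
    have hNeq : N = ∫ t in (-s)..s, Real.cos (2 * t * 0) * (1 - t ^ 2 / μ) ^ (μ - 3 / 2) := by
      rw [hNdef, ← hκeq, hsub0, ← hsdef, ← mul_assoc, mul_inv_cancel₀ hs0.ne', one_mul]
    have hI0 := I_est hμ4 0
    rw [← hNeq] at hI0
    have hπN : |N - Real.sqrt π| ≤ 2886 / μ := by
      simpa using hI0
    have h2886 : 2886 / μ ≤ 2886 / 25000 :=
      div_le_div_of_nonneg_left (by norm_num) (by norm_num) hcase
    have hsqrtπ : (1.7:ℝ) ≤ Real.sqrt π := by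
      rw [show (1.7:ℝ) = Real.sqrt 2.89 from by
        rw [show (2.89:ℝ) = 1.7 ^ 2 by norm_num]; exact (Real.sqrt_sq (by norm_num)).symm]
      exact Real.sqrt_le_sqrt (by nlinarith [Real.pi_gt_three])
    have hN1 : 1 ≤ N := by
      have := abs_le.mp hπN
      linarith [this.1]
    have hI := I_est hμ4 x
    rw [← hIdef] at hI
    have key : |I / N - Real.exp (-x ^ 2)| ≤ 5772 / μ := by
      have h1 : I / N - Real.exp (-x ^ 2) = (I - N * Real.exp (-x ^ 2)) / N := by
        field_simp
      rw [h1, abs_div, abs_of_pos hN0]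
      have h2 : |I - N * Real.exp (-x ^ 2)| ≤ 5772 / μ := by
        have h3 : I - N * Real.exp (-x ^ 2) = (I - Real.sqrt π * Real.exp (-x ^ 2))
            + (Real.sqrt π - N) * Real.exp (-x ^ 2) := by ring
        rw [h3]
        have h4 : |(Real.sqrt π - N) * Real.exp (-x ^ 2)| ≤ 2886 / μ := by
          rw [abs_mul, abs_of_pos hexp0, abs_sub_comm]
          calc |N - Real.sqrt π| * Real.exp (-x ^ 2) ≤ (2886 / μ) * 1 :=
                mul_le_mul hπN hexp1 hexp0.le (by positivity)
            _ = 2886 / μ := by ring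
        calc |(I - Real.sqrt π * Real.exp (-x ^ 2)) + (Real.sqrt π - N) * Real.exp (-x ^ 2)|
            ≤ |I - Real.sqrt π * Real.exp (-x ^ 2)| + |(Real.sqrt π - N) * Real.exp (-x ^ 2)| :=
              abs_add_le _ _
          _ ≤ 2886 / μ + 2886 / μ := add_le_add hI h4
          _ = 5772 / μ := by ring
      calc |I - N * Real.exp (-x ^ 2)| / N ≤ |I - N * Real.exp (-x ^ 2)| / 1 := by
            apply div_le_div_of_nonneg_left (abs_nonneg _) (by norm_num) hN1
        _ = |I - N * Real.exp (-x ^ 2)| := by rw [div_one]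
        _ ≤ 5772 / μ := h2
    rw [hJ]
    refine key.trans ?_
    exact (div_le_div_iff_of_pos_right hμ0).mpr (by norm_num)
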